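/- arXiv:1205.4340 — 2 statements merged into one kernel-verified Lean document; each statement's English description precedes it below -/
import Mathlib

section
/- For all n ≥ 1, p_od(n) - p_od(n-1) - p_od(n-3) + p_od(n-6) ≤ 0, where p_od(m) = 0 for m < 0. -/
/-- number of partitions of `n` in which the odd parts are distinct -/
def podCount (n : ℕ) : ℕ :=
  (Finset.univ.filter
    (fun l : Nat.Partition n => (l.parts.filter (fun i => i % 2 = 1)).Nodup)).card

/-- `podCount` extended by `0` on negative integers -/
def pod (m : ℤ) : ℤ := if 0 ≤ m then podCount m.toNat else 0

/-!
Write `D_a(m) = podGe a m` for the number of partitions of `m` with distinct odd parts and all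
parts `≥ a` (zero for `m < 0`), so that `p_od = D_1`. Splitting off the parts equal to `a` gives
`D_a(m) = D_{a+1}(m) + D_{a+1}(m - a)` for odd `a` and `D_a(m) = D_{a+1}(m) + D_a(m - a)` for even
`a`. These recursions turn `p_od(n) - p_od(n-1) - p_od(n-3) + p_od(n-6)` into
`D_5(n) - ∑_{j<4} D_4(n-5-j)`, and the last sum equals `∑_{k ≤ n-5} D_5(k)`. Finally, removing one
part from a partition counted by `D_5(n)`, `n ≥ 1`, leaves a partition counted by some `D_5(k)`
with `k ≤ n - 5`, and the removed part is `n - k`; hence `D_5(n) ≤ ∑_{k ≤ n-5} D_5(k)`.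
-/

open Finset

def HasDistinctOddParts (s : Multiset ℕ) : Prop := (s.filter Odd).Nodup

instance : DecidablePred HasDistinctOddParts :=
  fun s => inferInstanceAs (Decidable (s.filter Odd).Nodup)

namespace HasDistinctOddParts

variable {s t : Multiset ℕ} {a : ℕ}

theorem of_le (h : HasDistinctOddParts s) (hts : t ≤ s) : HasDistinctOddParts t :=
  Multiset.nodup_of_le (Multiset.filter_le_filter _ hts) h

theorem cons_iff_of_even (ha : Even a) :
    HasDistinctOddParts (a ::ₘ s) ↔ HasDistinctOddParts s := by
  rw [HasDistinctOddParts, Multiset.filter_cons_of_neg _ (Nat.not_odd_iff_even.2 ha)]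
  rfl

theorem cons_iff_of_odd (ha : Odd a) :
    HasDistinctOddParts (a ::ₘ s) ↔ a ∉ s ∧ HasDistinctOddParts s := by
  rw [HasDistinctOddParts, Multiset.filter_cons_of_pos _ ha, Multiset.nodup_cons,
    Multiset.mem_filter, and_iff_left ha]
  rfl

theorem notMem_erase (h : HasDistinctOddParts s) (ha : Odd a) : a ∉ s.erase a := by
  by_cases has : a ∈ s
  · rw [← Multiset.cons_erase has, cons_iff_of_odd ha] at h
    exact h.1
  · exact fun h' => has (Multiset.mem_of_mem_erase h')

end HasDistinctOddParts

def podParts (a n : ℕ) : Finset (Multiset ℕ) :=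
  ((univ : Finset n.Partition).image Nat.Partition.parts).filter
    (fun s => (∀ i ∈ s, a ≤ i) ∧ HasDistinctOddParts s)

def podGe (a : ℕ) (m : ℤ) : ℤ := if 0 ≤ m then #(podParts a m.toNat) else 0

theorem podGe_eq_zero_of_neg (a : ℕ) {m : ℤ} (hm : m < 0) : podGe a m = 0 :=
  if_neg hm.not_ge

theorem mem_podParts {a n : ℕ} {s : Multiset ℕ} :
    s ∈ podParts a n ↔ s.sum = n ∧ (∀ i ∈ s, 0 < i ∧ a ≤ i) ∧ HasDistinctOddParts s := by
  simp only [podParts, mem_filter, mem_image, mem_univ, true_and]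
  constructor
  · rintro ⟨⟨l, rfl⟩, ha, hs⟩
    exact ⟨l.parts_sum, fun i hi => ⟨l.parts_pos hi, ha i hi⟩, hs⟩
  · rintro ⟨hsum, hpos, hs⟩
    exact ⟨⟨⟨s, fun hi => (hpos _ hi).1, hsum⟩, rfl⟩, fun i hi => (hpos i hi).2, hs⟩

theorem pod_eq_podGe_one (m : ℤ) : pod m = podGe 1 m := by
  unfold pod podGe
  congr 2
  rw [podCount, podParts, filter_image, card_image_of_injective _ fun _ _ => Nat.Partition.ext]
  congr 1
  refine filter_congr fun l _ => ?_
  rw [HasDistinctOddParts, Multiset.filter_congr fun i _ => Nat.odd_iff.symm]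
  exact ⟨fun h => ⟨fun i hi => l.parts_pos hi, h⟩, And.right⟩

theorem card_podParts_eq_add (a n : ℕ) :
    #(podParts a n) = #(podParts (a + 1) n) + #((podParts a n).filter (a ∈ ·)) := by
  rw [← card_filter_add_card_filter_not (p := (a ∈ ·)), add_comm]
  congr 2
  ext s
  simp only [mem_filter, mem_podParts, Nat.succ_le_iff]
  constructor
  · rintro ⟨⟨hsum, hpos, hs⟩, has⟩
    exact ⟨hsum, fun i hi => ⟨(hpos i hi).1, (hpos i hi).2.lt_of_ne fun h => has (h ▸ hi)⟩, hs⟩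
  · rintro ⟨hsum, hpos, hs⟩
    exact ⟨⟨hsum, fun i hi => ⟨(hpos i hi).1, (hpos i hi).2.le⟩, hs⟩,
      fun ha => (hpos a ha).2.false⟩

theorem filter_mem_podParts_of_lt {a n : ℕ} (h : n < a) : (podParts a n).filter (a ∈ ·) = ∅ := by
  refine filter_false_of_mem fun s hs has => h.not_ge ?_
  rw [← (mem_podParts.1 hs).1]
  exact Multiset.le_sum_of_mem has

theorem podGe_eq_add_of_card_filter {a b : ℕ}
    (h : ∀ k, #((podParts a (k + a)).filter (a ∈ ·)) = #(podParts b k)) (m : ℤ) :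
    podGe a m = podGe (a + 1) m + podGe b (m - a) := by
  rcases lt_or_ge m 0 with hm | hm
  · simp only [podGe, if_neg hm.not_ge, if_neg (show ¬ 0 ≤ m - a by omega), add_zero]
  lift m to ℕ using hm
  rcases lt_or_ge m a with hma | hma
  · simp only [podGe, Int.natCast_nonneg, if_true, Int.toNat_natCast,
      if_neg (show ¬ 0 ≤ (m : ℤ) - a by omega), card_podParts_eq_add a m,
      filter_mem_podParts_of_lt hma, card_empty, add_zero]
  obtain ⟨k, rfl⟩ := Nat.exists_eq_add_of_le' hma
  rw [show ((k + a : ℕ) : ℤ) - a = k by push_cast; ring]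
  simp only [podGe, Int.natCast_nonneg, if_true, Int.toNat_natCast]
  rw [card_podParts_eq_add a (k + a), h k, Nat.cast_add]

theorem podGe_of_odd {a : ℕ} (ha : Odd a) (m : ℤ) :
    podGe a m = podGe (a + 1) m + podGe (a + 1) (m - a) := by
  refine podGe_eq_add_of_card_filter (fun k => ?_) m
  symm
  refine card_nbij' (a ::ₘ ·) (·.erase a) (fun s hs => ?_) (fun s hs => ?_)
    (fun s _ => Multiset.erase_cons_head a s) (fun s hs => Multiset.cons_erase (mem_filter.1 hs).2)
  · obtain ⟨hsum, hpos, hs⟩ := mem_podParts.1 hs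
    refine mem_filter.2
      ⟨mem_podParts.2 ⟨by simp [hsum, add_comm], ?_, ?_⟩, Multiset.mem_cons_self _ _⟩
    · simp only [Multiset.mem_cons, forall_eq_or_imp]
      exact ⟨⟨ha.pos, le_rfl⟩, fun i hi => ⟨(hpos i hi).1, by have := (hpos i hi).2; omega⟩⟩
    · exact (HasDistinctOddParts.cons_iff_of_odd ha).2 ⟨fun h => by have := (hpos a h).2; omega, hs⟩
  · dsimp only
    obtain ⟨hmem, has⟩ := mem_filter.1 hs
    obtain ⟨hsum, hpos, hs⟩ := mem_podParts.1 hmem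
    have hna := hs.notMem_erase ha
    refine mem_podParts.2 ⟨?_, fun i hi => ?_, hs.of_le (Multiset.erase_le a s)⟩
    · rw [← Multiset.cons_erase has, Multiset.sum_cons] at hsum
      omega
    · have := hpos i (Multiset.mem_of_mem_erase hi)
      exact ⟨this.1, this.2.lt_of_ne (by rintro rfl; exact hna hi)⟩

theorem podGe_of_even {a : ℕ} (ha : Even a) (ha0 : 0 < a) (m : ℤ) :
    podGe a m = podGe (a + 1) m + podGe a (m - a) := by
  refine podGe_eq_add_of_card_filter (fun k => ?_) m
  symm
  refine card_nbij' (a ::ₘ ·) (·.erase a) (fun s hs => ?_) (fun s hs => ?_)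
    (fun s _ => Multiset.erase_cons_head a s) (fun s hs => Multiset.cons_erase (mem_filter.1 hs).2)
  · obtain ⟨hsum, hpos, hs⟩ := mem_podParts.1 hs
    refine mem_filter.2 ⟨mem_podParts.2 ⟨by simp [hsum, add_comm], ?_,
      (HasDistinctOddParts.cons_iff_of_even ha).2 hs⟩, Multiset.mem_cons_self _ _⟩
    simp only [Multiset.mem_cons, forall_eq_or_imp]
    exact ⟨⟨ha0, le_rfl⟩, hpos⟩
  · dsimp only
    obtain ⟨hmem, has⟩ := mem_filter.1 hs
    obtain ⟨hsum, hpos, hs⟩ := mem_podParts.1 hmem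
    refine mem_podParts.2 ⟨?_, fun i hi => hpos i (Multiset.mem_of_mem_erase hi),
      hs.of_le (Multiset.erase_le a s)⟩
    rw [← Multiset.cons_erase has, Multiset.sum_cons] at hsum
    omega

theorem card_podParts_le_sum (a : ℕ) {n : ℕ} (hn : 0 < n) :
    #(podParts a n) ≤ ∑ k ∈ range (n + 1 - a), #(podParts a k) := by
  rw [← card_sigma]
  refine card_le_card_of_surjOn (fun p => (n - p.1) ::ₘ p.2) fun s hs => ?_
  obtain ⟨hsum, hpos, hs⟩ := mem_podParts.1 hs
  obtain ⟨x, hx⟩ := Multiset.exists_mem_of_ne_zero (s := s) (by rintro rfl; simp at hsum; omega)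
  have hrest : x + (s.erase x).sum = n := hsum ▸ Multiset.sum_erase hx
  have hxa := hpos x hx
  -- `s` is recovered from any of its parts `x` and the partition `s.erase x` of `n - x`
  refine ⟨⟨n - x, s.erase x⟩, mem_sigma.2 ⟨mem_range.2 (show n - x < n + 1 - a by omega),
    mem_podParts.2 ⟨show (s.erase x).sum = n - x by omega,
      fun i hi => hpos i (Multiset.mem_of_mem_erase hi), hs.of_le (Multiset.erase_le x s)⟩⟩, ?_⟩
  change (n - (n - x)) ::ₘ s.erase x = s
  rw [Nat.sub_sub_self (by omega), Multiset.cons_erase hx]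

theorem sum_range_podGe_sub {a : ℕ} (ha : Even a) (ha0 : 0 < a) (x : ℤ) :
    ∑ j ∈ range a, podGe a (x - j) = ∑ k ∈ range (x + 1).toNat, podGe (a + 1) k := by
  have step : ∀ x : ℤ, ∑ j ∈ range a, podGe a (x - j) =
      ∑ j ∈ range a, podGe a (x - 1 - j) + podGe (a + 1) x := by
    intro x
    have h := sum_range_succ' (fun j => podGe a (x - j)) a
    simp only [sum_range_succ, Nat.cast_add, Nat.cast_one, Nat.cast_zero, sub_zero,
      sub_add_eq_sub_sub_swap] at h
    rw [podGe_of_even ha ha0 x] at h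
    linarith
  rcases lt_or_ge x 0 with hx | hx
  · rw [show (x + 1).toNat = 0 by omega, sum_range_zero]
    exact sum_eq_zero fun j _ => podGe_eq_zero_of_neg a (by omega)
  lift x to ℕ using hx
  induction x with
  | zero =>
    rw [step, sum_eq_zero fun j _ => podGe_eq_zero_of_neg a (by omega)]
    simp
  | succ n ih =>
    rw [step, show ((n + 1 : ℕ) : ℤ) - 1 = n by push_cast; ring, ih,
      show (((n + 1 : ℕ) : ℤ) + 1).toNat = (n + 1) + 1 by omega, sum_range_succ _ (n + 1),
      show ((n : ℤ) + 1).toNat = n + 1 by omega]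

theorem podGe_succ_le_sum {a : ℕ} (ha : Even a) (ha0 : 0 < a) {m : ℤ} (hm : 0 < m) :
    podGe (a + 1) m ≤ ∑ j ∈ range a, podGe a (m - (a + 1) - j) := by
  rw [sum_range_podGe_sub ha ha0]
  lift m to ℕ using hm.le
  have h := card_podParts_le_sum (a + 1) (n := m) (by omega)
  rw [show ((m : ℤ) - (a + 1) + 1).toNat = m + 1 - (a + 1) by omega]
  simp only [podGe, Int.natCast_nonneg, if_true, Int.toNat_natCast]
  exact_mod_cast h

theorem pod_sub_pod_sub_one (m : ℤ) : pod m - pod (m - 1) = podGe 3 m := by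
  have h1 : podGe 1 m = podGe 2 m + podGe 2 (m - 1) := podGe_of_odd odd_one m
  have h2 : podGe 1 (m - 1) = podGe 2 (m - 1) + podGe 2 (m - 2) := by
    rw [podGe_of_odd odd_one, sub_sub, Nat.cast_one, one_add_one_eq_two]
    rfl
  have h3 : podGe 2 m = podGe 3 m + podGe 2 (m - 2) := podGe_of_even even_two two_pos m
  rw [pod_eq_podGe_one, pod_eq_podGe_one]
  linarith

theorem podGe_three_sub (x : ℤ) :
    podGe 3 x - podGe 3 (x - 3) - podGe 3 (x - 4) - podGe 3 (x - 5) =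
      podGe 5 x - ∑ j ∈ range 4, podGe 4 (x - 5 - j) := by
  have h3 : ∀ y, podGe 3 y = podGe 4 y + podGe 4 (y - 3) := podGe_of_odd (by decide)
  have h4 : podGe 4 x = podGe 5 x + podGe 4 (x - 4) := podGe_of_even (by decide) (by decide) x
  simp only [sum_range_succ, sum_range_zero, h3]
  ring_nf at h4 ⊢
  linarith

theorem pod_ineq_k1 (n : ℕ) (hn : 1 ≤ n) :
    pod n - pod ((n : ℤ) - 1) - pod ((n : ℤ) - 3) + pod ((n : ℤ) - 6) ≤ 0 := by
  have hT : pod n - pod ((n : ℤ) - 1) - pod ((n : ℤ) - 3) + pod ((n : ℤ) - 6) =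
      podGe 3 n - podGe 3 (n - 3) - podGe 3 (n - 4) - podGe 3 (n - 5) := by
    have e0 := pod_sub_pod_sub_one n
    have e3 := pod_sub_pod_sub_one (n - 3)
    have e4 := pod_sub_pod_sub_one (n - 4)
    have e5 := pod_sub_pod_sub_one (n - 5)
    ring_nf at e0 e3 e4 e5 ⊢
    linarith
  rw [hT, podGe_three_sub, sub_nonpos]
  exact podGe_succ_le_sum (a := 4) (by decide) (by decide) (by omega)
end

section
/- For all n ≥ 1, p(n) - p(n-1) - p(n-2) + p(n-5) ≤ 0, where p(m) = 0 for m < 0. -/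
/-!
Write `p_k(m)` for the number of partitions of `m` into parts `≥ k` (zero for `m < 0`). Splitting
according to whether some part equals `k` gives `p_k(m) = p_{k+1}(m) + p_k(m - k)`. With `k = 1, 2`
this turns `p(n) - p(n-1) - p(n-2) + p(n-5)` into `p_3(n) - p_2(n-3) - p_2(n-4)`, and a downward
induction on `k`, driven by the same recurrence, gives `p_k(m) ≤ p_2(m-k) + p_2(m-k-1)` for all
`k ≥ 3` and `m ≥ 1`.
-/

/-- the partition function -/
def partitionCount (n : ℕ) : ℕ := Fintype.card (Nat.Partition n)

/-- the partition function extended by `0` on negative integers -/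
def pp (m : ℤ) : ℤ := if 0 ≤ m then partitionCount m.toNat else 0

open Finset

namespace Nat.Partition

theorem restricted_one_le_eq_univ (n : ℕ) : restricted n (1 ≤ ·) = univ :=
  filter_true_of_mem fun p _ _ hi => p.parts_pos hi

theorem card_restricted_zero (P : ℕ → Prop) [DecidablePred P] : #(restricted 0 P) = 1 := by
  simp [restricted]

theorem restricted_le_subset_of_le {j k : ℕ} (n : ℕ) (hjk : j ≤ k) :
    restricted n (k ≤ ·) ⊆ restricted n (j ≤ ·) :=
  monotone_filter_right _ fun _ _ hp i hi => hjk.trans (hp i hi)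

theorem restricted_le_eq_empty {k n : ℕ} (hn : 0 < n) (hnk : n < k) :
    restricted n (k ≤ ·) = ∅ := by
  refine filter_false_of_mem fun p _ hp => ?_
  have hne : p.parts ≠ 0 := fun h0 => hn.ne (by simpa [h0] using p.parts_sum)
  obtain ⟨i, hi⟩ := Multiset.exists_mem_of_ne_zero hne
  exact absurd ((hp i hi).trans (le_of_mem_parts hi)) hnk.not_ge

theorem card_restricted_le_eq_add {k n : ℕ} (hk : 1 ≤ k) (hkn : k ≤ n) :
    #(restricted n (k ≤ ·)) = #(restricted n (k + 1 ≤ ·)) + #(restricted (n - k) (k ≤ ·)) := by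
  rw [← card_filter_add_card_filter_not (s := restricted n (k ≤ ·)) (fun p => k ∉ p.parts)]
  congr 1
  · congr 1
    ext p
    simp only [restricted, mem_filter, mem_univ, true_and, Nat.succ_le_iff]
    exact ⟨fun ⟨hp, hk⟩ i hi => (hp i hi).lt_of_ne (ne_of_mem_of_not_mem hi hk).symm,
      fun hp => ⟨fun i hi => (hp i hi).le, fun hk => (hp k hk).false⟩⟩
  · let e := partitionWithPartEquiv hk hkn
    refine card_bij' (fun p hp => e ⟨p, not_not.mp (mem_filter.mp hp).2⟩)
      (fun q _ => (e.symm q).1) ?_ ?_ ?_ ?_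
    · intro p hp
      simp only [restricted, mem_filter, mem_univ, true_and, not_not] at hp ⊢
      simpa [e] using fun i hi => hp.1 i (Multiset.mem_of_mem_erase hi)
    · intro q hq
      simpa [e, restricted] using hq
    all_goals simp [e]

end Nat.Partition

open Nat.Partition

def ppGE (k : ℕ) (m : ℤ) : ℤ := if 0 ≤ m then #(restricted m.toNat (k ≤ ·)) else 0

theorem pp_eq_ppGE_one (m : ℤ) : pp m = ppGE 1 m := by
  simp only [pp, ppGE, restricted_one_le_eq_univ, card_univ, partitionCount]

theorem ppGE_nonneg (k : ℕ) (m : ℤ) : 0 ≤ ppGE k m := by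
  unfold ppGE
  split_ifs <;> positivity

theorem ppGE_of_neg (k : ℕ) {m : ℤ} (hm : m < 0) : ppGE k m = 0 :=
  if_neg hm.not_ge

theorem ppGE_zero (k : ℕ) : ppGE k 0 = 1 := by
  simp [ppGE, card_restricted_zero]

theorem ppGE_eq_zero_of_lt {k : ℕ} {m : ℤ} (hm : 0 < m) (hmk : m < k) : ppGE k m = 0 := by
  rw [ppGE, if_pos hm.le, restricted_le_eq_empty (by omega) (by omega), card_empty,
    Nat.cast_zero]

theorem ppGE_le_ppGE_of_le {j k : ℕ} (hjk : j ≤ k) (m : ℤ) : ppGE k m ≤ ppGE j m := by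
  unfold ppGE
  split_ifs
  · exact_mod_cast card_le_card (restricted_le_subset_of_le _ hjk)
  · exact le_rfl

theorem ppGE_eq_add {k : ℕ} (hk : 1 ≤ k) (m : ℤ) :
    ppGE k m = ppGE (k + 1) m + ppGE k (m - k) := by
  rcases lt_or_ge m 0 with hm | hm
  · simp [ppGE_of_neg, hm, show m - k < 0 by omega]
  obtain rfl | hm := hm.eq_or_lt
  · simp [ppGE_zero, ppGE_of_neg _ (show -(k : ℤ) < 0 by omega)]
  rcases lt_or_ge m k with hmk | hkm
  · rw [ppGE_eq_zero_of_lt hm hmk, ppGE_eq_zero_of_lt hm (by omega), ppGE_of_neg _ (by omega),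
      add_zero]
  · have hnk : (m - k).toNat = m.toNat - k := by omega
    rw [ppGE, ppGE, ppGE, if_pos hm.le, if_pos hm.le, if_pos (sub_nonneg.mpr hkm), hnk]
    exact_mod_cast card_restricted_le_eq_add (n := m.toNat) hk (by omega)

theorem ppGE_le_ppGE_two_add {k : ℕ} (hk : 3 ≤ k) {m : ℤ} (hm : 1 ≤ m) :
    ppGE k m ≤ ppGE 2 (m - k) + ppGE 2 (m - k - 1) := by
  have hk_split := ppGE_eq_add (by omega : 1 ≤ k) m
  have hk_tail : ppGE k (m - k) ≤ ppGE 2 (m - k) - ppGE 2 (m - k - 2) := by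
    have h₂ := ppGE_eq_add (k := 2) (by norm_num) (m - k)
    have h₃ := ppGE_le_ppGE_of_le hk (m - k)
    push_cast at h₂ h₃
    linarith
  have hk_succ : ppGE (k + 1) m ≤ ppGE 2 (m - k - 1) + ppGE 2 (m - k - 2) := by
    rcases le_or_gt m k with hmk | hkm
    · rw [ppGE_eq_zero_of_lt (by omega) (by push_cast; omega)]
      exact add_nonneg (ppGE_nonneg _ _) (ppGE_nonneg _ _)
    · convert ppGE_le_ppGE_two_add (k := k + 1) (by omega) hm using 3 <;> push_cast <;> ring
  linarith
termination_by (m - k).toNat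

theorem merca_ineq (n : ℕ) (hn : 1 ≤ n) :
    pp n - pp ((n : ℤ) - 1) - pp ((n : ℤ) - 2) + pp ((n : ℤ) - 5) ≤ 0 := by
  have h₁ (j : ℤ) : ppGE 1 (n - j) = ppGE 2 (n - j) + ppGE 1 (n - (j + 1)) := by
    simpa [sub_sub] using ppGE_eq_add le_rfl (n - j)
  have h₂ : ppGE 2 n = ppGE 3 n + ppGE 2 (n - 2) := by
    simpa using ppGE_eq_add (k := 2) (by norm_num) n
  have h₃ : ppGE 3 n ≤ ppGE 2 (n - 3) + ppGE 2 (n - 4) := by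
    simpa [sub_sub] using ppGE_le_ppGE_two_add le_rfl (m := n) (by exact_mod_cast hn)
  have h₁₀ := h₁ 0
  have h₁₂ := h₁ 2
  have h₁₃ := h₁ 3
  have h₁₄ := h₁ 4
  norm_num at h₁₀ h₁₂ h₁₃ h₁₄
  simp only [pp_eq_ppGE_one]
  linarith
end
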